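/- arXiv:2104.12328 — 3 statements merged into one kernel-verified Lean document; each statement's English description precedes it below -/
import Mathlib

section
/- Assume that for each T > 0 and t ≥ T the map (ξ₁,ξ₂) ↦ l(t−T,t,ξ₁,ξ₂,u) is twice continuously differentiable. If there exists T > 0 such that for every t ≥ T there exists R_t > 0 with d²_{ξ₂}l(t−T,t,ξ₁,ξ₂,u) positive definite for all (ξ₁,ξ₂) ∈ B̄(x(t−T),R_t)², then u is weakly persistent at x₀. -/
open MeasureTheory Metric Set Filter

/-- State space `ℝ^n` with the Euclidean norm. -/
abbrev Vec (n : ℕ) := EuclideanSpace ℝ (Fin n)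

/-- Cumulative output error
`l(t₁,t₂,ξ₁,ξ₂,u) = ∫_{t₁}^{t₂} ‖h(φ(s;t₁,ξ₁,u),u(s)) − h(φ(s;t₁,ξ₂,u),u(s))‖² ds`. -/
noncomputable def cumError {nx nu ny : ℕ}
    (h : Vec nx → Vec nu → Vec ny) (φ : ℝ → ℝ → Vec nx → Vec nx)
    (u : ℝ → Vec nu) (t₁ t₂ : ℝ) (ξ₁ ξ₂ : Vec nx) : ℝ :=
  ∫ s in t₁..t₂, ‖h (φ s t₁ ξ₁) (u s) - h (φ s t₁ ξ₂) (u s)‖ ^ 2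

/-- A `𝒦`-function: continuous, strictly increasing on `[0,∞)`, vanishing at `0`. -/
def IsKFunction (κ : ℝ → ℝ) : Prop :=
  ContinuousOn κ (Set.Ici 0) ∧ StrictMonoOn κ (Set.Ici 0) ∧ κ 0 = 0

/-- Weakly persistent input trajectory at `x₀`. -/
def WeaklyPersistentAt {nx nu ny : ℕ}
    (h : Vec nx → Vec nu → Vec ny) (φ : ℝ → ℝ → Vec nx → Vec nx)
    (u : ℝ → Vec nu) (x₀ : Vec nx) : Prop :=
  ∃ T > (0 : ℝ), ∀ t ≥ T, ∃ R > (0 : ℝ), ∃ κ : ℝ → ℝ, IsKFunction κ ∧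
    ∀ ξ₁ ∈ Metric.closedBall (φ (t - T) 0 x₀) R,
      ∀ ξ₂ ∈ Metric.closedBall (φ (t - T) 0 x₀) R,
        κ ‖ξ₁ - ξ₂‖ ≤ cumError h φ u (t - T) t ξ₁ ξ₂

/-- Second Fréchet derivative of `ξ ↦ l(t₁,t₂,ξ₁,ξ,u)` at `ξ₂`, as a bilinear form. -/
noncomputable def d2l {nx nu ny : ℕ}
    (h : Vec nx → Vec nu → Vec ny) (φ : ℝ → ℝ → Vec nx → Vec nx)
    (u : ℝ → Vec nu) (t₁ t₂ : ℝ) (ξ₁ ξ₂ v w : Vec nx) : ℝ :=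
  iteratedFDeriv ℝ 2 (fun ξ => cumError h φ u t₁ t₂ ξ₁ ξ) ξ₂ ![v, w]

/-!
Fix `ξ₁` in the ball. The map `ξ ↦ l(ξ₁, ξ)` is nonnegative and vanishes at `ξ₁`, so its
derivative vanishes there; along the segment to any `ξ₂ ≠ ξ₁` in the ball its second derivative
is positive, so it is strictly increasing along the segment and `l(ξ₁, ξ₂) > 0`.

On a compact set `S`, a continuous nonnegative `L` that is positive off the diagonal dominates a
`𝒦`-function of the distance: `ψ(r) = inf_{p ∈ S × S} (L p + (r - dist p)⁺)` is continuous,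
nondecreasing, positive for `r > 0` and satisfies `ψ (dist p) ≤ L p`, and `r ψ(r) / (1 + r)` is
then strictly increasing.
-/

lemma lt_of_deriv_eq_zero_of_deriv_deriv_pos {G G' G'' : ℝ → ℝ} {a b : ℝ} (hab : a < b)
    (hG : ∀ s, HasDerivAt G (G' s) s) (hG' : ∀ s, HasDerivAt G' (G'' s) s)
    (ha : G' a = 0) (hpos : ∀ s ∈ Ioo a b, 0 < G'' s) : G a < G b := by
  have hG'_mono : StrictMonoOn G' (Icc a b) :=
    strictMonoOn_of_deriv_pos (convex_Icc a b)
      (fun s _ => (hG' s).continuousAt.continuousWithinAt)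
      (fun s hs => by rw [(hG' s).deriv]; exact hpos s (by rwa [interior_Icc] at hs))
  have hG_mono : StrictMonoOn G (Icc a b) :=
    strictMonoOn_of_deriv_pos (convex_Icc a b)
      (fun s _ => (hG s).continuousAt.continuousWithinAt)
      (fun s hs => by
        rw [interior_Icc] at hs
        rw [(hG s).deriv, ← ha]
        exact hG'_mono (left_mem_Icc.2 hab.le) (Ioo_subset_Icc_self hs) hs.1)
  exact hG_mono (left_mem_Icc.2 hab.le) (right_mem_Icc.2 hab.le) hab

lemma lt_of_fderiv_eq_zero_of_hessian_pos {E : Type*} [NormedAddCommGroup E] [NormedSpace ℝ E]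
    {F : E → ℝ} (hF : ContDiff ℝ 2 F) {S : Set E} (hS : Convex ℝ S) {x y : E} (hx : x ∈ S)
    (hy : y ∈ S) (hxy : x ≠ y) (hcrit : fderiv ℝ F x = 0)
    (hess : ∀ ξ ∈ S, ∀ v ≠ 0, 0 < fderiv ℝ (fderiv ℝ F) ξ v v) : F x < F y := by
  set v := y - x
  set c : ℝ → E := fun s => x + s • v with hc_def
  have hc : ∀ s, HasDerivAt c v s := fun s => by
    simpa [hc_def] using ((hasDerivAt_id s).smul_const v).const_add x
  have hcS : ∀ s ∈ Ioo (0 : ℝ) 1, c s ∈ S := fun s hs => by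
    convert hS.add_smul_sub_mem hx hy (Ioo_subset_Icc_self hs) using 1
  have hF' : Differentiable ℝ F := hF.differentiable (by norm_num)
  have hF'' : Differentiable ℝ (fderiv ℝ F) :=
    (hF.fderiv_right (m := 1) (by norm_num)).differentiable (by norm_num)
  have hG : ∀ s, HasDerivAt (fun s => F (c s)) (fderiv ℝ F (c s) v) s := fun s =>
    (hF' (c s)).hasFDerivAt.comp_hasDerivAt s (hc s)
  have hG' : ∀ s, HasDerivAt (fun s => fderiv ℝ F (c s) v)
      (fderiv ℝ (fderiv ℝ F) (c s) v v) s := fun s => by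
    simpa using ((hF'' (c s)).hasFDerivAt.comp_hasDerivAt s (hc s)).clm_apply (hasDerivAt_const s v)
  have key := lt_of_deriv_eq_zero_of_deriv_deriv_pos one_pos hG hG'
    (by simp [c, hcrit]) (fun s hs => hess _ (hcS s hs) v (sub_ne_zero.2 hxy.symm))
  simpa [c, v] using key

section LowerModulus

variable {X : Type*} [MetricSpace X]

noncomputable def lowerModulus (S : Set X) (L : X × X → ℝ) (r : ℝ) : ℝ :=
  sInf ((fun p : X × X => L p + max (r - dist p.1 p.2) 0) '' (S ×ˢ S))

variable {S : Set X} {L : X × X → ℝ}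

lemma zero_mem_lowerBounds_lowerModulus (hL : ∀ p ∈ S ×ˢ S, 0 ≤ L p) (r : ℝ) :
    0 ∈ lowerBounds ((fun p : X × X => L p + max (r - dist p.1 p.2) 0) '' (S ×ˢ S)) := by
  rintro _ ⟨p, hp, rfl⟩
  exact add_nonneg (hL p hp) (le_max_right _ _)

lemma lowerModulus_nonneg (hL : ∀ p ∈ S ×ˢ S, 0 ≤ L p) (r : ℝ) : 0 ≤ lowerModulus S L r :=
  Real.sInf_nonneg (zero_mem_lowerBounds_lowerModulus hL r)

lemma lowerModulus_dist_le (hL : ∀ p ∈ S ×ˢ S, 0 ≤ L p) {p : X × X} (hp : p ∈ S ×ˢ S) :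
    lowerModulus S L (dist p.1 p.2) ≤ L p := by
  simpa [lowerModulus] using
    csInf_le ⟨0, zero_mem_lowerBounds_lowerModulus hL (dist p.1 p.2)⟩ (mem_image_of_mem _ hp)

lemma monotone_lowerModulus (hne : S.Nonempty) (hL : ∀ p ∈ S ×ˢ S, 0 ≤ L p) :
    Monotone (lowerModulus S L) := fun a b hab =>
  le_csInf ((hne.prod hne).image _) <| by
    rintro _ ⟨p, hp, rfl⟩
    refine (csInf_le ⟨0, zero_mem_lowerBounds_lowerModulus hL a⟩ (mem_image_of_mem _ hp)).trans ?_
    dsimp only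
    gcongr

lemma continuous_lowerModulus (hS : IsCompact S) (hL : Continuous L) :
    Continuous (lowerModulus S L) :=
  (hS.prod hS).continuous_sInf (by fun_prop)

lemma lowerModulus_pos (hS : IsCompact S) (hne : S.Nonempty) (hLc : Continuous L)
    (hL : ∀ p ∈ S ×ˢ S, 0 ≤ L p) (hLpos : ∀ p ∈ S ×ˢ S, p.1 ≠ p.2 → 0 < L p) {r : ℝ}
    (hr : 0 < r) : 0 < lowerModulus S L r := by
  obtain ⟨p, hp, hmin⟩ := (hS.prod hS).exists_sInf_image_eq (hne.prod hne)
    (f := fun p : X × X => L p + max (r - dist p.1 p.2) 0) (by fun_prop)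
  rw [lowerModulus, hmin]
  rcases lt_or_ge (dist p.1 p.2) r with hd | hd
  · exact add_pos_of_nonneg_of_pos (hL p hp) (lt_max_of_lt_left (sub_pos.2 hd))
  · have hne : p.1 ≠ p.2 := dist_pos.1 (hr.trans_le hd)
    exact add_pos_of_pos_of_nonneg (hLpos p hp hne) (le_max_right _ _)

end LowerModulus

lemma exists_isKFunction_le {X : Type*} [MetricSpace X] {S : Set X} (hS : IsCompact S)
    (hne : S.Nonempty) {L : X × X → ℝ} (hLc : Continuous L) (hL : ∀ p ∈ S ×ˢ S, 0 ≤ L p)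
    (hLpos : ∀ p ∈ S ×ˢ S, p.1 ≠ p.2 → 0 < L p) :
    ∃ κ, IsKFunction κ ∧ ∀ x ∈ S, ∀ y ∈ S, κ (dist x y) ≤ L (x, y) := by
  set ψ := lowerModulus S L
  have hψ0 := lowerModulus_nonneg hL
  refine ⟨fun r => r / (1 + r) * ψ r, ⟨?_, ?_, by simp⟩, fun x hx y hy => ?_⟩
  · refine ContinuousOn.mul ?_ (continuous_lowerModulus hS hLc).continuousOn
    exact continuousOn_id.div (by fun_prop : Continuous fun r : ℝ => 1 + r).continuousOn
      fun r hr => by have := mem_Ici.1 hr; positivity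
  · intro a (ha : 0 ≤ a) b (hb : 0 ≤ b) hab
    have hfrac : a / (1 + a) < b / (1 + b) := by
      rw [div_lt_div_iff₀ (by positivity) (by positivity)]
      linarith
    calc a / (1 + a) * ψ a ≤ a / (1 + a) * ψ b := by
          gcongr
          exact monotone_lowerModulus hne hL hab.le
      _ < b / (1 + b) * ψ b := by
          gcongr
          exact lowerModulus_pos hS hne hLc hL hLpos (ha.trans_lt hab)
  · have hd := dist_nonneg (x := x) (y := y)
    calc dist x y / (1 + dist x y) * ψ (dist x y) ≤ 1 * ψ (dist x y) := by
          gcongr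
          · exact hψ0 _
          · rw [div_le_one (by positivity)]
            linarith
      _ ≤ L (x, y) := by
          simpa using lowerModulus_dist_le hL (p := (x, y)) ⟨hx, hy⟩

section CumError

variable {nx nu ny : ℕ} (h : Vec nx → Vec nu → Vec ny) (φ : ℝ → ℝ → Vec nx → Vec nx)
  (u : ℝ → Vec nu)

lemma cumError_nonneg {t₁ t₂ : ℝ} (ht : t₁ ≤ t₂) (ξ₁ ξ₂ : Vec nx) :
    0 ≤ cumError h φ u t₁ t₂ ξ₁ ξ₂ :=
  intervalIntegral.integral_nonneg ht fun _ _ => by positivity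

lemma cumError_self (t₁ t₂ : ℝ) (ξ : Vec nx) : cumError h φ u t₁ t₂ ξ ξ = 0 := by
  simp [cumError]

lemma cumError_pos_of_d2l_pos {t₁ t₂ : ℝ} (ht : t₁ ≤ t₂) {ξ₁ ξ₂ : Vec nx}
    (hC2 : ContDiff ℝ 2 (cumError h φ u t₁ t₂ ξ₁)) {S : Set (Vec nx)} (hS : Convex ℝ S)
    (h₁ : ξ₁ ∈ S) (h₂ : ξ₂ ∈ S) (hne : ξ₁ ≠ ξ₂)
    (hd2 : ∀ ξ ∈ S, ∀ v ≠ 0, 0 < d2l h φ u t₁ t₂ ξ₁ ξ v v) :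
    0 < cumError h φ u t₁ t₂ ξ₁ ξ₂ := by
  have hmin : IsLocalMin (cumError h φ u t₁ t₂ ξ₁) ξ₁ :=
    Eventually.of_forall fun ξ => by
      rw [cumError_self]
      exact cumError_nonneg h φ u ht ξ₁ ξ
  have key := lt_of_fderiv_eq_zero_of_hessian_pos hC2 hS h₁ h₂ hne hmin.fderiv_eq_zero
    fun ξ hξ v hv => by simpa [d2l, iteratedFDeriv_two_apply] using hd2 ξ hξ v hv
  rwa [cumError_self] at key

end CumError

theorem stmt4_general {nx nu ny : ℕ}
    (h : Vec nx → Vec nu → Vec ny)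
    (u : ℝ → Vec nu) (φ : ℝ → ℝ → Vec nx → Vec nx) (x₀ : Vec nx)
    (hC2 : ∀ T > (0 : ℝ), ∀ t ≥ T,
      ContDiff ℝ 2 (fun p : Vec nx × Vec nx => cumError h φ u (t - T) t p.1 p.2))
    (hpos : ∃ T > (0 : ℝ), ∀ t ≥ T, ∃ R > (0 : ℝ),
      ∀ ξ₁ ∈ Metric.closedBall (φ (t - T) 0 x₀) R,
        ∀ ξ₂ ∈ Metric.closedBall (φ (t - T) 0 x₀) R,
          ∀ v : Vec nx, v ≠ 0 → 0 < d2l h φ u (t - T) t ξ₁ ξ₂ v v) :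
    WeaklyPersistentAt h φ u x₀ := by
  obtain ⟨T, hT, hposT⟩ := hpos
  refine ⟨T, hT, fun t ht => ?_⟩
  obtain ⟨R, hR, hd2⟩ := hposT t ht
  have hle : t - T ≤ t := by linarith
  have hL := hC2 T hT t ht
  have hLpos : ∀ p ∈ closedBall (φ (t - T) 0 x₀) R ×ˢ closedBall (φ (t - T) 0 x₀) R,
      p.1 ≠ p.2 → 0 < cumError h φ u (t - T) t p.1 p.2 := fun p hp hne =>
    cumError_pos_of_d2l_pos h φ u hle
      (by simpa only [Function.comp_def] using hL.comp (contDiff_prodMk_right p.1))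
      (convex_closedBall _ R) hp.1 hp.2 hne (hd2 p.1 hp.1)
  obtain ⟨κ, hκ, hκL⟩ := exists_isKFunction_le (isCompact_closedBall _ R)
    (nonempty_closedBall.2 hR.le) hL.continuous
    (fun p _ => cumError_nonneg h φ u hle p.1 p.2) hLpos
  refine ⟨R, hR, κ, hκ, fun ξ₁ h₁ ξ₂ h₂ => ?_⟩
  rw [← dist_eq_norm]
  exact hκL ξ₁ h₁ ξ₂ h₂

/-- positive definiteness of the Hessian of the MHE cost on a
neighbourhood of `x(t−T)` implies weak persistence of `u` at `x₀`. -/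
theorem stmt4 {nx nu ny : ℕ}
    (f : Vec nx → Vec nu → Vec nx) (h : Vec nx → Vec nu → Vec ny)
    (u : ℝ → Vec nu) (φ : ℝ → ℝ → Vec nx → Vec nx) (x₀ : Vec nx)
    (hf : ContDiff ℝ 2 (Function.uncurry f))
    (hh : ContDiff ℝ 2 (Function.uncurry h))
    (hflow_init : ∀ s₁ : ℝ, 0 ≤ s₁ → ∀ ξ, φ s₁ s₁ ξ = ξ)
    (hflow_ode : ∀ s₁ s : ℝ, 0 ≤ s₁ → s₁ ≤ s → ∀ ξ,
      HasDerivAt (fun τ => φ τ s₁ ξ) (f (φ s s₁ ξ) (u s)) s)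
    (hC2 : ∀ T > (0 : ℝ), ∀ t ≥ T,
      ContDiff ℝ 2 (fun p : Vec nx × Vec nx => cumError h φ u (t - T) t p.1 p.2))
    (hpos : ∃ T > (0 : ℝ), ∀ t ≥ T, ∃ R > (0 : ℝ),
      ∀ ξ₁ ∈ Metric.closedBall (φ (t - T) 0 x₀) R,
        ∀ ξ₂ ∈ Metric.closedBall (φ (t - T) 0 x₀) R,
          ∀ v : Vec nx, v ≠ 0 → 0 < d2l h φ u (t - T) t ξ₁ ξ₂ v v) :
    WeaklyPersistentAt h φ u x₀ :=
  stmt4_general h u φ x₀ hC2 hpos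
end

section
/- For every σ ∈ ℝ, the constant radial input u_cst(s) = σ(ℓ − x₀) is not a universal input trajectory of the bearing-only system — i.e. for every t ≥ 0 there exist ξ₁ ≠ ξ₂ in ℝ² such that h(φ(s;0,ξ₁,u_cst)) = h(φ(s;0,ξ₂,u_cst)) for all s ∈ [0,t] — and u_cst is not weakly persistent at x₀. -/
/-!
Under the radial input `σ (ℓ - x₀)` the line through `ℓ` and `x₀` is invariant: the point
`ℓ + c (x₀ - ℓ)` is at `ℓ + (c - τσ)(x₀ - ℓ)` a time `τ` later. On this line the bearing only
records the side of `ℓ`, and once `cσ ≤ 0` the coefficient `c - τσ` keeps its sign forever. So two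
distinct points of such a receding half-line are never distinguished by the output. The trajectory
of `x₀` itself recedes from some time on, hence every ball around `x(t - T)` contains such a pair
and the output error admits no `𝒦` lower bound.
-/

open MeasureTheory Metric Set Filter Classical

/-- The plane `ℝ²` with the Euclidean norm. -/
abbrev Pt := EuclideanSpace ℝ (Fin 2)

/-- The vector `(a, b) ∈ ℝ²`. -/
noncomputable def vec2 (a b : ℝ) : Pt := (WithLp.equiv 2 (Fin 2 → ℝ)).symm ![a, b]

/-- Bearing measurement towards the beacon `ℓ`: `h(z) = (ℓ−z)/‖ℓ−z‖` for `z ≠ ℓ`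
(with the convention `h(ℓ) = 0`). -/
noncomputable def bearing (ℓ z : Pt) : Pt := if z = ℓ then 0 else ‖ℓ - z‖⁻¹ • (ℓ - z)

/-- Flow of the single-integrator dynamics `ẋ = u`:
`φ(s;t₁,ξ,u) = ξ + ∫_{t₁}^{s} u(τ)dτ`. -/
noncomputable def flow2 (u : ℝ → Pt) (s t₁ : ℝ) (ξ : Pt) : Pt := ξ + ∫ τ in t₁..s, u τ

/-- Cumulative output error of the bearing-only system. -/
noncomputable def cumError2 (ℓ : Pt) (u : ℝ → Pt) (t₁ t₂ : ℝ) (ξ₁ ξ₂ : Pt) : ℝ :=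
  ∫ s in t₁..t₂, ‖bearing ℓ (flow2 u s t₁ ξ₁) - bearing ℓ (flow2 u s t₁ ξ₂)‖ ^ 2

/-- Weakly persistent input trajectory at `x₀` for the bearing-only system. -/
def WeaklyPersistentAt2 (ℓ : Pt) (u : ℝ → Pt) (x₀ : Pt) : Prop :=
  ∃ T > (0 : ℝ), ∀ t ≥ T, ∃ R > (0 : ℝ), ∃ κ : ℝ → ℝ, IsKFunction κ ∧
    ∀ ξ₁ ∈ Metric.closedBall (flow2 u (t - T) 0 x₀) R,
      ∀ ξ₂ ∈ Metric.closedBall (flow2 u (t - T) 0 x₀) R,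
        κ ‖ξ₁ - ξ₂‖ ≤ cumError2 ℓ u (t - T) t ξ₁ ξ₂

lemma IsKFunction.pos {κ : ℝ → ℝ} (hκ : IsKFunction κ) {r : ℝ} (hr : 0 < r) : 0 < κ r := by
  obtain ⟨-, hmono, h0⟩ := hκ
  simpa [h0] using hmono self_mem_Ici hr.le hr

lemma not_weaklyPersistentAt2_of_indistinguishable {ℓ x₀ : Pt} {u : ℝ → Pt}
    (h : ∀ T > 0, ∃ t ≥ T, ∀ R > 0, ∃ ξ₁ ∈ closedBall (flow2 u (t - T) 0 x₀) R,
      ∃ ξ₂ ∈ closedBall (flow2 u (t - T) 0 x₀) R, ξ₁ ≠ ξ₂ ∧ cumError2 ℓ u (t - T) t ξ₁ ξ₂ = 0) :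
    ¬ WeaklyPersistentAt2 ℓ u x₀ := by
  rintro ⟨T, hT, hP⟩
  obtain ⟨t, htT, hpair⟩ := h T hT
  obtain ⟨R, hR, κ, hκ, hbound⟩ := hP t htT
  obtain ⟨ξ₁, h₁, ξ₂, h₂, hne, hzero⟩ := hpair R hR
  have hpos := hκ.pos (norm_pos_iff.mpr (sub_ne_zero.mpr hne))
  linarith [hbound ξ₁ h₁ ξ₂ h₂]

lemma bearing_add_smul_of_pos (ℓ v : Pt) {a : ℝ} (ha : 0 < a) :
    bearing ℓ (ℓ + a • v) = -(‖v‖⁻¹ • v) := by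
  by_cases hv : v = 0
  · simp [hv, bearing]
  have hne : ℓ + a • v ≠ ℓ := by simp [ha.ne', hv]
  rw [bearing, if_neg hne, show ℓ - (ℓ + a • v) = -(a • v) by abel, norm_neg, norm_smul,
    Real.norm_of_nonneg ha.le, smul_neg, smul_smul, mul_inv_rev, mul_assoc,
    inv_mul_cancel₀ ha.ne', mul_one]

lemma bearing_add_smul_eq_of_mul_pos (ℓ v : Pt) {a b : ℝ} (hab : 0 < a * b) :
    bearing ℓ (ℓ + a • v) = bearing ℓ (ℓ + b • v) := by
  rcases mul_pos_iff.mp hab with ⟨ha, hb⟩ | ⟨ha, hb⟩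
  · rw [bearing_add_smul_of_pos ℓ v ha, bearing_add_smul_of_pos ℓ v hb]
  · rw [← neg_smul_neg a v, ← neg_smul_neg b v, bearing_add_smul_of_pos ℓ (-v) (neg_pos.mpr ha),
      bearing_add_smul_of_pos ℓ (-v) (neg_pos.mpr hb)]

lemma flow2_radial (ℓ x₀ : Pt) (σ c s t₁ : ℝ) :
    flow2 (fun _ => σ • (ℓ - x₀)) s t₁ (ℓ + c • (x₀ - ℓ)) =
      ℓ + (c - (s - t₁) * σ) • (x₀ - ℓ) := by
  simp only [flow2, intervalIntegral.integral_const]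
  module

lemma mul_pos_sub_mul_of_mul_nonpos {c₁ c₂ σ τ : ℝ} (hc : 0 < c₁ * c₂) (h₁ : c₁ * σ ≤ 0)
    (h₂ : c₂ * σ ≤ 0) (hτ : 0 ≤ τ) : 0 < (c₁ - τ * σ) * (c₂ - τ * σ) := by
  nlinarith [mul_nonneg hτ (neg_nonneg.mpr h₁), mul_nonneg hτ (neg_nonneg.mpr h₂),
    sq_nonneg (τ * σ)]

section Receding

variable {ℓ x₀ : Pt} {σ c₁ c₂ : ℝ}

lemma bearing_flow2_radial_eq (hc : 0 < c₁ * c₂) (h₁ : c₁ * σ ≤ 0) (h₂ : c₂ * σ ≤ 0)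
    {s t₁ : ℝ} (hs : t₁ ≤ s) :
    bearing ℓ (flow2 (fun _ => σ • (ℓ - x₀)) s t₁ (ℓ + c₁ • (x₀ - ℓ))) =
      bearing ℓ (flow2 (fun _ => σ • (ℓ - x₀)) s t₁ (ℓ + c₂ • (x₀ - ℓ))) := by
  rw [flow2_radial, flow2_radial]
  exact bearing_add_smul_eq_of_mul_pos _ _
    (mul_pos_sub_mul_of_mul_nonpos hc h₁ h₂ (sub_nonneg.mpr hs))

lemma cumError2_radial_eq_zero (hc : 0 < c₁ * c₂) (h₁ : c₁ * σ ≤ 0) (h₂ : c₂ * σ ≤ 0)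
    {t₁ t₂ : ℝ} (ht : t₁ ≤ t₂) :
    cumError2 ℓ (fun _ => σ • (ℓ - x₀)) t₁ t₂ (ℓ + c₁ • (x₀ - ℓ)) (ℓ + c₂ • (x₀ - ℓ)) = 0 := by
  rw [cumError2, intervalIntegral.integral_congr (g := fun _ => (0 : ℝ)),
    intervalIntegral.integral_zero]
  intro s hs
  rw [uIcc_of_le ht] at hs
  simp [bearing_flow2_radial_eq hc h₁ h₂ hs.1]

end Receding

-- For `σ > 0` the trajectory of `x₀` crosses `ℓ` at `τ = 1/σ`; at `τ = 2/σ` it is receding.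
lemma exists_receding_coeff (σ : ℝ) : ∃ τ ≥ 0, 1 - τ * σ ≠ 0 ∧ (1 - τ * σ) * σ ≤ 0 := by
  rcases le_or_gt σ 0 with hσ | hσ
  · exact ⟨0, le_rfl, by norm_num, by simpa using hσ⟩
  · refine ⟨2 / σ, by positivity, ?_, ?_⟩ <;> rw [div_mul_cancel₀ 2 hσ.ne'] <;> linarith

lemma exists_ne_forall_bearing_flow2_radial_eq {ℓ x₀ : Pt} (hx₀ : x₀ ≠ ℓ) (σ : ℝ) :
    ∃ ξ₁ ξ₂ : Pt, ξ₁ ≠ ξ₂ ∧ ∀ s ≥ 0,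
      bearing ℓ (flow2 (fun _ => σ • (ℓ - x₀)) s 0 ξ₁) =
        bearing ℓ (flow2 (fun _ => σ • (ℓ - x₀)) s 0 ξ₂) := by
  obtain ⟨τ, -, hc, hcσ⟩ := exists_receding_coeff σ
  generalize 1 - τ * σ = c at hc hcσ
  refine ⟨ℓ + c • (x₀ - ℓ), ℓ + (2 * c) • (x₀ - ℓ), fun h => hc ?_,
    fun s hs => bearing_flow2_radial_eq (by nlinarith [mul_self_pos.mpr hc]) hcσ (by linarith) hs⟩
  linarith [smul_left_injective ℝ (sub_ne_zero.mpr hx₀) (add_left_cancel h)]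

lemma not_weaklyPersistentAt2_radial {ℓ x₀ : Pt} (hx₀ : x₀ ≠ ℓ) (σ : ℝ) :
    ¬ WeaklyPersistentAt2 ℓ (fun _ => σ • (ℓ - x₀)) x₀ := by
  obtain ⟨τ, hτ, hc, hcσ⟩ := exists_receding_coeff σ
  refine not_weaklyPersistentAt2_of_indistinguishable fun T hT =>
    ⟨T + τ, by linarith, fun R hR => ?_⟩
  have hcenter : flow2 (fun _ => σ • (ℓ - x₀)) (T + τ - T) 0 x₀ =
      ℓ + (1 - τ * σ) • (x₀ - ℓ) := by
    simp only [flow2, intervalIntegral.integral_const]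
    module
  generalize 1 - τ * σ = c at hc hcσ hcenter
  have hcv : 0 < ‖c • (x₀ - ℓ)‖ := norm_pos_iff.mpr (smul_ne_zero hc (sub_ne_zero.mpr hx₀))
  set δ := R / ‖c • (x₀ - ℓ)‖
  have hδ : 0 < δ := div_pos hR hcv
  have hdist : ‖ℓ + ((1 + δ) * c) • (x₀ - ℓ) - (ℓ + c • (x₀ - ℓ))‖ = R := by
    rw [show ℓ + ((1 + δ) * c) • (x₀ - ℓ) - (ℓ + c • (x₀ - ℓ)) = δ • c • (x₀ - ℓ) by module,
      norm_smul, Real.norm_of_nonneg hδ.le, div_mul_cancel₀ _ hcv.ne']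
  rw [hcenter]
  refine ⟨_, mem_closedBall_self hR.le, _, by rw [mem_closedBall, dist_eq_norm, hdist], ?_,
    cumError2_radial_eq_zero (by nlinarith [mul_self_pos.mpr hc]) hcσ ?_ (by linarith)⟩
  · intro h
    rw [h, sub_self, norm_zero] at hdist
    exact hR.ne hdist
  · rw [mul_assoc]
    exact mul_nonpos_of_nonneg_of_nonpos (by linarith) hcσ

/-- the constant radial input `u_cst(s) = σ(ℓ − x₀)` is neither a
universal input trajectory of the bearing-only system nor weakly persistent at `x₀`. -/
theorem stmt17 (ℓ x₀ : Pt) (hx₀ : x₀ ≠ ℓ) (σ : ℝ) :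
    (∀ t : ℝ, 0 ≤ t → ∃ ξ₁ ξ₂ : Pt, ξ₁ ≠ ξ₂ ∧
      ∀ s ∈ Icc (0 : ℝ) t,
        bearing ℓ (flow2 (fun _ => σ • (ℓ - x₀)) s 0 ξ₁) =
          bearing ℓ (flow2 (fun _ => σ • (ℓ - x₀)) s 0 ξ₂)) ∧
    ¬ WeaklyPersistentAt2 ℓ (fun _ => σ • (ℓ - x₀)) x₀ := by
  obtain ⟨ξ₁, ξ₂, hne, heq⟩ := exists_ne_forall_bearing_flow2_radial_eq hx₀ σ
  exact ⟨fun _ _ => ⟨ξ₁, ξ₂, hne, fun s hs => heq s hs.1⟩, not_weaklyPersistentAt2_radial hx₀ σ⟩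
end

section
/- Let ω > 0, α > 0, r₀ = ‖ℓ − x₀‖ > 0, and let ψ₀ ∈ ℝ be such that x₀ − ℓ = r₀(cos ψ₀, sin ψ₀). Define the outward spiral input u_spi(s) = r₀ e^{αs} ( ω(−sin(ωs + ψ₀), cos(ωs + ψ₀)) + α(cos(ωs + ψ₀), sin(ωs + ψ₀)) ), so that x(s) = ℓ + r₀ e^{αs}(cos(ωs + ψ₀), sin(ωs + ψ₀)) and in particular x(s) ≠ ℓ for all s. Then: (i) u_spi is a weakly persistent input trajectory of the bearing-only system at x₀; and (ii) for every T > 0, the Observability Grammian C(t,T) = ∫_{t−T}^{t} Dh(x(s))ᵀ Dh(x(s)) ds (where Dh(x) is the Jacobian matrix of h at x ≠ ℓ) satisfies ‖C(t,T)‖ → 0 as t → ∞. -/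
open MeasureTheory Metric Set Filter Classical

/-- Observability Grammian of the bearing-only system on `[t−T,t]`:
`C(t,T) = ∫_{t−T}^{t} Dh(x(s))ᵀ Dh(x(s)) ds`, represented as the operator
`∫_{t−T}^{t} (d(bearing ℓ)(x s))* ∘ d(bearing ℓ)(x s) ds` on `ℝ²`. -/
noncomputable def gram2 (ℓ : Pt) (u : ℝ → Pt) (x₀ : Pt) (t T : ℝ) : Pt →L[ℝ] Pt :=
  ∫ s in (t - T)..t,
    (ContinuousLinearMap.adjoint (fderiv ℝ (bearing ℓ) (flow2 u s 0 x₀))).comp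
      (fderiv ℝ (bearing ℓ) (flow2 u s 0 x₀))

/-! Along the spiral, `x(s) - ℓ` has length `r₀ e^{αs}`. The Jacobian of the bearing has norm at
most `2 / ‖ℓ - x‖`, so it decays like `e^{-αs}`, and the Grammian, the integral of its square over
a window of fixed length, decays like `e^{-2αt}`.

Weak persistence is a compactness argument. Take two initial states in a ball around `x(t-1)` that
stays away from `ℓ`. If they produced the same bearings on `[t-1, t]`, their difference, which the
flow does not change, would stay parallel to `ℓ - x(s)`. The spiral would then run along a line
for a whole time interval, and the rotation `ω ≠ 0` forbids that. So the cumulative error is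
continuous, and positive off the diagonal of a compact set, and such a function dominates a
`𝒦`-function of the distance. -/

open Real Topology
open scoped RealInnerProductSpace

@[simp] lemma vec2_apply_zero (a b : ℝ) : vec2 a b 0 = a := rfl
@[simp] lemma vec2_apply_one (a b : ℝ) : vec2 a b 1 = b := rfl

lemma vec2_self (z : Pt) : vec2 (z 0) (z 1) = z := by
  ext i; fin_cases i <;> rfl

lemma vec2_eq_smul_add_smul (a b : ℝ) : vec2 a b = a • vec2 1 0 + b • vec2 0 1 := by
  ext i; fin_cases i <;> simp

lemma hasDerivAt_vec2 {f g : ℝ → ℝ} {f' g' s : ℝ} (hf : HasDerivAt f f' s)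
    (hg : HasDerivAt g g' s) : HasDerivAt (fun τ => vec2 (f τ) (g τ)) (vec2 f' g') s := by
  simp only [vec2_eq_smul_add_smul (f _), vec2_eq_smul_add_smul f']
  exact (hf.smul_const _).add (hg.smul_const _)

@[fun_prop]
lemma continuous_vec2 {f g : ℝ → ℝ} (hf : Continuous f) (hg : Continuous g) :
    Continuous (fun τ => vec2 (f τ) (g τ)) := by
  simp only [vec2_eq_smul_add_smul (f _)]
  fun_prop

lemma inner_vec2 (a b c d : ℝ) : ⟪vec2 a b, vec2 c d⟫ = a * c + b * d := by
  simp [vec2, PiLp.inner_apply, Fin.sum_univ_two]; ring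

lemma norm_vec2_cos_sin (θ : ℝ) : ‖vec2 (cos θ) (sin θ)‖ = 1 := by
  rw [norm_eq_sqrt_real_inner, inner_vec2, ← sq, ← sq, cos_sq_add_sin_sq, sqrt_one]

lemma exists_ne_zero_inner_eq_zero (v : Pt) : ∃ q : Pt, q ≠ 0 ∧ ⟪q, v⟫ = 0 := by
  by_cases hv : v = 0
  · exact ⟨vec2 1 0, fun h => by simpa using congrArg (· 0) h, by simp [hv]⟩
  · refine ⟨vec2 (-(v 1)) (v 0), fun h => hv ?_, ?_⟩
    · rw [← vec2_self v, show v 0 = 0 from congrArg (· 1) h,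
        show v 1 = 0 from neg_eq_zero.mp (congrArg (· 0) h)]
      ext i; fin_cases i <;> rfl
    · have h := inner_vec2 (-(v 1)) (v 0) (v 0) (v 1)
      rw [vec2_self] at h
      rw [h]; ring

lemma norm_inv_norm_smul_sub_le {E : Type*} [NormedAddCommGroup E] [NormedSpace ℝ E]
    {x : E} (hx : x ≠ 0) (y : E) : ‖‖x‖⁻¹ • x - ‖y‖⁻¹ • y‖ ≤ 2 * ‖x - y‖ / ‖x‖ := by
  have hunit : ∀ {v : E}, v ≠ 0 → ‖‖v‖⁻¹ • v‖ = 1 := fun hv => by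
    rw [norm_smul, norm_inv, norm_norm, inv_mul_cancel₀ (norm_ne_zero_iff.mpr hv)]
  have hx' : 0 < ‖x‖ := norm_pos_iff.mpr hx
  rcases eq_or_ne y 0 with rfl | hy
  · rw [norm_zero, inv_zero, zero_smul, sub_zero, sub_zero, hunit hx, mul_div_assoc,
      div_self hx'.ne']
    norm_num
  have hy' : 0 < ‖y‖ := norm_pos_iff.mpr hy
  calc ‖‖x‖⁻¹ • x - ‖y‖⁻¹ • y‖
      = ‖‖x‖⁻¹ • (x - y) + ((‖y‖ - ‖x‖) / ‖x‖) • (‖y‖⁻¹ • y)‖ := by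
        rw [smul_smul, show (‖y‖ - ‖x‖) / ‖x‖ * ‖y‖⁻¹ = ‖x‖⁻¹ - ‖y‖⁻¹ by field_simp, sub_smul,
          smul_sub]
        abel_nf
    _ ≤ ‖x - y‖ / ‖x‖ + |‖y‖ - ‖x‖| / ‖x‖ := by
        refine norm_add_le_of_le ?_ ?_
        · rw [norm_smul, norm_inv, norm_norm, inv_mul_eq_div]
        · rw [norm_smul, hunit hy, mul_one, Real.norm_eq_abs, abs_div, abs_norm]
    _ ≤ 2 * ‖x - y‖ / ‖x‖ := by
        rw [← add_div, two_mul]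
        gcongr
        exact (abs_norm_sub_norm_le y x).trans_eq (norm_sub_rev y x)

lemma bearing_eq (ℓ z : Pt) : bearing ℓ z = ‖ℓ - z‖⁻¹ • (ℓ - z) := by
  unfold bearing
  split_ifs with h <;> simp [h]

lemma norm_bearing_le (ℓ z : Pt) : ‖bearing ℓ z‖ ≤ 1 := by
  simpa [bearing_eq] using inv_norm_smul_mem_unitClosedBall (ℓ - z)

lemma norm_smul_bearing (ℓ z : Pt) : ‖ℓ - z‖ • bearing ℓ z = ℓ - z := by
  rcases eq_or_ne (ℓ - z) 0 with h | h
  · simp [bearing_eq, h]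
  · rw [bearing_eq, smul_smul, mul_inv_cancel₀ (norm_ne_zero_iff.mpr h), one_smul]

lemma norm_bearing_sub_le {ℓ z : Pt} (hz : z ≠ ℓ) (z' : Pt) :
    ‖bearing ℓ z' - bearing ℓ z‖ ≤ 2 / ‖ℓ - z‖ * ‖z' - z‖ := by
  have h := norm_inv_norm_smul_sub_le (sub_ne_zero.mpr hz.symm) (ℓ - z')
  rw [sub_sub_sub_cancel_left, ← bearing_eq, ← bearing_eq, norm_sub_rev] at h
  exact h.trans_eq (by ring)

lemma continuousAt_bearing {ℓ z : Pt} (hz : z ≠ ℓ) : ContinuousAt (bearing ℓ) z :=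
  continuousAt_of_locally_lipschitz one_pos _ fun z' _ => by
    simpa only [dist_eq_norm] using norm_bearing_sub_le hz z'

lemma norm_fderiv_bearing_le {ℓ z : Pt} (hz : z ≠ ℓ) :
    ‖fderiv ℝ (bearing ℓ) z‖ ≤ 2 / ‖ℓ - z‖ :=
  norm_fderiv_le_of_lip' ℝ (by positivity) (Eventually.of_forall (norm_bearing_sub_le hz))

lemma inner_eq_zero_of_bearing_eq {ℓ z₁ z₂ q : Pt} (hb : bearing ℓ z₁ = bearing ℓ z₂)
    (hne : z₁ ≠ z₂) (hq : ⟪q, z₁ - z₂⟫ = 0) : ⟪q, ℓ - z₁⟫ = 0 := by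
  have hdiff : z₁ - z₂ = (‖ℓ - z₂‖ - ‖ℓ - z₁‖) • bearing ℓ z₁ := by
    rw [sub_smul, norm_smul_bearing, hb, norm_smul_bearing]; abel
  have hc : ‖ℓ - z₂‖ - ‖ℓ - z₁‖ ≠ 0 := by
    rintro hc; rw [hc, zero_smul, sub_eq_zero] at hdiff; exact hne hdiff
  rw [hdiff, real_inner_smul_right, mul_eq_zero] at hq
  rw [← norm_smul_bearing, real_inner_smul_right, hq.resolve_left hc, mul_zero]

lemma HasDerivAt.eq_zero_of_forall_mem_Ioo {f : ℝ → ℝ} {f' K a b s : ℝ} (hf : HasDerivAt f f' s)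
    (hs : s ∈ Ioo a b) (h : ∀ x ∈ Ioo a b, f x = K) : f' = 0 :=
  hf.unique <| (hasDerivAt_const s K).congr_of_eventuallyEq <|
    eventually_of_mem (Ioo_mem_nhds hs.1 hs.2) h

lemma hasDerivAt_cos_sin_comb (p q ω ψ s : ℝ) :
    HasDerivAt (fun s => p * cos (ω * s + ψ) + q * sin (ω * s + ψ))
      (ω * q * cos (ω * s + ψ) + -(ω * p) * sin (ω * s + ψ)) s := by
  have hθ := (hasDerivAt_id' s).const_mul ω |>.add_const ψ
  exact ((hθ.cos.const_mul p).add (hθ.sin.const_mul q)).congr_deriv (by ring)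

lemma cos_sin_comb_eq_zero {p q ω ψ a b : ℝ} (hω : ω ≠ 0) (hab : a < b)
    (h : ∀ s ∈ Ioo a b, p * cos (ω * s + ψ) + q * sin (ω * s + ψ) = 0) : p = 0 ∧ q = 0 := by
  obtain ⟨s, hs⟩ := nonempty_Ioo.mpr hab
  have hval := h s hs
  have hderiv := (hasDerivAt_cos_sin_comb p q ω ψ s).eq_zero_of_forall_mem_Ioo hs h
  have htrig := sin_sq_add_cos_sq (ω * s + ψ)
  constructor
  · refine (mul_eq_zero.mp ?_).resolve_left hω
    linear_combination ω * cos (ω * s + ψ) * hval - sin (ω * s + ψ) * hderiv - ω * p * htrig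
  · refine (mul_eq_zero.mp ?_).resolve_left hω
    linear_combination ω * sin (ω * s + ψ) * hval + cos (ω * s + ψ) * hderiv - ω * q * htrig

lemma exp_mul_cos_sin_comb_eq_const {p q α ω ψ a b K : ℝ} (hω : ω ≠ 0) (hab : a < b)
    (h : ∀ s ∈ Ioo a b, exp (α * s) * (p * cos (ω * s + ψ) + q * sin (ω * s + ψ)) = K) :
    p = 0 ∧ q = 0 := by
  have hderiv : ∀ s ∈ Ioo a b,
      (α * p + ω * q) * cos (ω * s + ψ) + (α * q - ω * p) * sin (ω * s + ψ) = 0 := by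
    intro s hs
    have hexp := (hasDerivAt_id' s).const_mul α |>.exp
    have := ((hexp.mul (hasDerivAt_cos_sin_comb p q ω ψ s)).eq_zero_of_forall_mem_Ioo hs h)
    refine (mul_eq_zero.mp ?_).resolve_left (exp_pos (α * s)).ne'
    linear_combination this
  obtain ⟨h₁, h₂⟩ := cos_sin_comb_eq_zero hω hab hderiv
  have hpos : 0 < α ^ 2 + ω ^ 2 := by positivity
  constructor
  · refine (mul_eq_zero.mp ?_).resolve_left hpos.ne'
    linear_combination α * h₁ - ω * h₂
  · refine (mul_eq_zero.mp ?_).resolve_left hpos.ne'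
    linear_combination ω * h₁ + α * h₂

/-- `x(s) - ℓ` along the trajectory driven by `spiralInput` from `x₀ = ℓ + spiral ω α r₀ ψ₀ 0`. -/
noncomputable def spiral (ω α r₀ ψ₀ s : ℝ) : Pt :=
  (r₀ * exp (α * s)) • vec2 (cos (ω * s + ψ₀)) (sin (ω * s + ψ₀))

noncomputable def spiralInput (ω α r₀ ψ₀ τ : ℝ) : Pt :=
  (r₀ * exp (α * τ)) •
    (ω • vec2 (-sin (ω * τ + ψ₀)) (cos (ω * τ + ψ₀)) +
      α • vec2 (cos (ω * τ + ψ₀)) (sin (ω * τ + ψ₀)))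

section Spiral

variable {ω α r₀ ψ₀ : ℝ}

lemma hasDerivAt_spiral (s : ℝ) :
    HasDerivAt (spiral ω α r₀ ψ₀) (spiralInput ω α r₀ ψ₀ s) s := by
  have hθ := (hasDerivAt_id' s).const_mul ω |>.add_const ψ₀
  have hρ := ((hasDerivAt_id' s).const_mul α).exp.const_mul r₀
  refine (hρ.smul (hasDerivAt_vec2 hθ.cos hθ.sin)).congr_deriv ?_
  ext i; fin_cases i <;> simp [spiralInput] <;> ring

lemma continuous_spiral : Continuous (spiral ω α r₀ ψ₀) :=
  continuous_iff_continuousAt.2 fun s => (hasDerivAt_spiral s).continuousAt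

lemma continuous_spiralInput : Continuous (spiralInput ω α r₀ ψ₀) := by
  unfold spiralInput
  fun_prop

lemma flow2_spiralInput (s a : ℝ) (ξ : Pt) :
    flow2 (spiralInput ω α r₀ ψ₀) s a ξ = ξ + (spiral ω α r₀ ψ₀ s - spiral ω α r₀ ψ₀ a) := by
  rw [flow2, intervalIntegral.integral_eq_sub_of_hasDerivAt (fun τ _ => hasDerivAt_spiral τ)
    (continuous_spiralInput.intervalIntegrable _ _)]

lemma spiral_zero : spiral ω α r₀ ψ₀ 0 = r₀ • vec2 (cos ψ₀) (sin ψ₀) := by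
  simp [spiral]

lemma norm_spiral (hr₀ : 0 ≤ r₀) (s : ℝ) : ‖spiral ω α r₀ ψ₀ s‖ = r₀ * exp (α * s) := by
  rw [spiral, norm_smul, norm_vec2_cos_sin, mul_one, Real.norm_of_nonneg (by positivity)]

lemma spiral_ne_zero (hr₀ : 0 < r₀) (s : ℝ) : spiral ω α r₀ ψ₀ s ≠ 0 := by
  rw [← norm_pos_iff, norm_spiral hr₀.le]; positivity

lemma inner_vec2_spiral (p q s : ℝ) : ⟪vec2 p q, spiral ω α r₀ ψ₀ s⟫ =
    r₀ * exp (α * s) * (p * cos (ω * s + ψ₀) + q * sin (ω * s + ψ₀)) := by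
  rw [spiral, real_inner_smul_right, inner_vec2]

lemma eq_zero_of_inner_spiral_eq_const (hω : ω ≠ 0) (hr₀ : r₀ ≠ 0) {a b K : ℝ} (hab : a < b)
    {q : Pt} (h : ∀ s ∈ Ioo a b, ⟪q, spiral ω α r₀ ψ₀ s⟫ = K) : q = 0 := by
  rw [← vec2_self q] at h
  obtain ⟨h₀, h₁⟩ := exp_mul_cos_sin_comb_eq_const (p := q 0) (q := q 1) (α := α) (ψ := ψ₀)
    (K := K / r₀) hω hab fun s hs => by rw [eq_div_iff hr₀, ← h s hs, inner_vec2_spiral]; ring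
  ext i; fin_cases i
  exacts [h₀, h₁]

end Spiral

lemma exists_isKFunction_le_of_monotone {g : ℝ → ℝ} (hg : Monotone g)
    (hpos : ∀ d, 0 < d → 0 < g d) : ∃ κ : ℝ → ℝ, IsKFunction κ ∧ ∀ d, 0 < d → κ d ≤ g d := by
  set A : ℝ → ℝ := fun x => ∫ τ in (0 : ℝ)..x, g τ
  have hint : ∀ x y : ℝ, IntervalIntegrable g volume x y := fun _ _ => hg.intervalIntegrable
  have hsub : ∀ x y, A y - A x = ∫ τ in x..y, g τ := fun x y =>
    intervalIntegral.integral_interval_sub_left (hint 0 y) (hint 0 x)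
  have hA0 : A 0 = 0 := intervalIntegral.integral_same
  have hlow : ∀ x y, x ≤ y → (y - x) * g x ≤ A y - A x := fun x y hxy => by
    simpa [hsub] using intervalIntegral.integral_mono_on hxy intervalIntegrable_const (hint x y)
      fun τ hτ => hg hτ.1
  have hup : ∀ x, 0 ≤ x → A x ≤ x * g x := fun x hx => by
    simpa using intervalIntegral.integral_mono_on hx (hint 0 x) intervalIntegrable_const
      fun τ hτ => hg hτ.2
  have hinc : ∀ x y, 0 ≤ x → x < y → 0 < A y - A x := fun x y hx hxy => by
    rw [hsub]
    exact intervalIntegral.intervalIntegral_pos_of_pos_on (hint x y)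
      (fun τ hτ => hpos τ (hx.trans_lt hτ.1)) hxy
  -- `A x / (1 + x)` is `x / (1 + x)` times the mean of `g` on `[0, x]`
  refine ⟨fun x => A x / (1 + x), ⟨?_, ?_, ?_⟩, ?_⟩
  · exact (intervalIntegral.continuous_primitive hint 0).continuousOn.div (by fun_prop)
      fun x (hx : 0 ≤ x) => by positivity
  · intro x (hx : 0 ≤ x) y (hy : 0 ≤ y) hxy
    rw [div_lt_div_iff₀ (by positivity) (by positivity)]
    nlinarith [mul_le_mul_of_nonneg_left (hlow x y hxy.le) hx,
      mul_le_mul_of_nonneg_left (hup x hx) (sub_nonneg.2 hxy.le), hinc x y hx hxy]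
  · simp [hA0]
  · intro d hd
    rw [div_le_iff₀ (by positivity)]
    nlinarith [hup d hd.le, hpos d hd]

lemma exists_isKFunction_le_of_isCompact {X : Type*} [PseudoMetricSpace X] {D : Set (X × X)}
    (hD : IsCompact D) {F : X × X → ℝ} (hF : ContinuousOn F D) (hF0 : ∀ p ∈ D, 0 ≤ F p)
    (hFpos : ∀ p ∈ D, p.1 ≠ p.2 → 0 < F p) :
    ∃ κ : ℝ → ℝ, IsKFunction κ ∧ ∀ p ∈ D, κ (dist p.1 p.2) ≤ F p := by
  -- inserting `1` keeps `S d` nonempty (`sInf ∅ = 0`) when no pair of `D` is `d` apart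
  set S : ℝ → Set ℝ := fun d => insert 1 (F '' (D ∩ {p | d ≤ dist p.1 p.2}))
  have hS : ∀ d, IsCompact (S d) := fun d =>
    ((hD.inter_right (isClosed_le continuous_const continuous_dist)).image_of_continuousOn
      (hF.mono inter_subset_left)).insert 1
  have hmono : Monotone fun d => sInf (S d) := fun d d' h =>
    csInf_le_csInf (hS d).bddBelow (insert_nonempty _ _)
      (insert_subset_insert (image_mono (inter_subset_inter_right _ fun _ hp => h.trans hp)))
  have hpos : ∀ d, 0 < d → 0 < sInf (S d) := by
    intro d hd
    rcases (hS d).sInf_mem (insert_nonempty _ _) with h | ⟨p, ⟨hpD, hpd⟩, hpF⟩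
    · rw [h]; exact one_pos
    · rw [← hpF]
      exact hFpos p hpD fun h => by rw [mem_ofPred_eq, h, dist_self] at hpd; linarith
  obtain ⟨κ, hκ, hκle⟩ := exists_isKFunction_le_of_monotone hmono hpos
  refine ⟨κ, hκ, fun p hp => ?_⟩
  rcases (dist_nonneg (x := p.1) (y := p.2)).eq_or_lt with h | h
  · rw [← h, hκ.2.2]; exact hF0 p hp
  · exact (hκle _ h).trans (csInf_le (hS _).bddBelow
      (mem_insert_of_mem _ ⟨p, ⟨hp, le_refl (dist p.1 p.2)⟩, rfl⟩))

section Trajectory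

variable {ℓ : Pt} {ω α r₀ ψ₀ : ℝ}

lemma flow2_spiralInput_of_eq {x₀ : Pt} (hx₀ : x₀ = ℓ + spiral ω α r₀ ψ₀ 0) (s : ℝ) :
    flow2 (spiralInput ω α r₀ ψ₀) s 0 x₀ = ℓ + spiral ω α r₀ ψ₀ s := by
  rw [flow2_spiralInput, hx₀]; abel

lemma half_le_norm_sub_flow2_spiralInput (hα : 0 ≤ α) (hr₀ : 0 ≤ r₀) {a s : ℝ} (hs : 0 ≤ s)
    {ξ : Pt} (hξ : ξ ∈ closedBall (ℓ + spiral ω α r₀ ψ₀ a) (r₀ / 2)) :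
    r₀ / 2 ≤ ‖ℓ - flow2 (spiralInput ω α r₀ ψ₀) s a ξ‖ := by
  rw [mem_closedBall, dist_eq_norm, norm_sub_rev] at hξ
  have hfar : r₀ ≤ ‖spiral ω α r₀ ψ₀ s‖ := by
    rw [norm_spiral hr₀]
    nlinarith [one_le_exp (mul_nonneg hα hs)]
  have htri := norm_sub_norm_le (spiral ω α r₀ ψ₀ s) (ℓ + spiral ω α r₀ ψ₀ a - ξ)
  rw [flow2_spiralInput, show ℓ - (ξ + (spiral ω α r₀ ψ₀ s - spiral ω α r₀ ψ₀ a)) =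
    ℓ + spiral ω α r₀ ψ₀ a - ξ - spiral ω α r₀ ψ₀ s by abel, norm_sub_rev]
  linarith

lemma flow2_spiralInput_ne (hα : 0 ≤ α) (hr₀ : 0 < r₀) {a s : ℝ} (hs : 0 ≤ s)
    {ξ : Pt} (hξ : ξ ∈ closedBall (ℓ + spiral ω α r₀ ψ₀ a) (r₀ / 2)) :
    flow2 (spiralInput ω α r₀ ψ₀) s a ξ ≠ ℓ := fun h => by
  have := half_le_norm_sub_flow2_spiralInput hα hr₀.le hs hξ
  rw [h, sub_self, norm_zero] at this
  linarith

lemma continuousOn_bearing_flow2_spiralInput (hα : 0 ≤ α) (hr₀ : 0 < r₀) (a : ℝ) :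
    ContinuousOn (fun q : Pt × ℝ => bearing ℓ (flow2 (spiralInput ω α r₀ ψ₀) q.2 a q.1))
      (closedBall (ℓ + spiral ω α r₀ ψ₀ a) (r₀ / 2) ×ˢ Ici 0) := by
  have hflow : Continuous fun q : Pt × ℝ => flow2 (spiralInput ω α r₀ ψ₀) q.2 a q.1 := by
    simp only [flow2_spiralInput]
    exact continuous_fst.add ((continuous_spiral.comp continuous_snd).sub continuous_const)
  exact fun q hq => ((continuousAt_bearing (flow2_spiralInput_ne hα hr₀ hq.2 hq.1)).comp
    (f := fun q : Pt × ℝ => flow2 (spiralInput ω α r₀ ψ₀) q.2 a q.1) (x := q)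
    hflow.continuousAt).continuousWithinAt

lemma continuousOn_cumError2_spiralInput (hα : 0 ≤ α) (hr₀ : 0 < r₀) {a b : ℝ} (ha : 0 ≤ a)
    (hab : a ≤ b) :
    ContinuousOn (fun p : Pt × Pt => cumError2 ℓ (spiralInput ω α r₀ ψ₀) a b p.1 p.2)
      (closedBall (ℓ + spiral ω α r₀ ψ₀ a) (r₀ / 2) ×ˢ
        closedBall (ℓ + spiral ω α r₀ ψ₀ a) (r₀ / 2)) := by
  have hjoint := continuousOn_bearing_flow2_spiralInput (ω := ω) (ψ₀ := ψ₀) (ℓ := ℓ) hα hr₀ a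
  have htime : ∀ ξ ∈ closedBall (ℓ + spiral ω α r₀ ψ₀ a) (r₀ / 2),
      ContinuousOn (fun s => bearing ℓ (flow2 (spiralInput ω α r₀ ψ₀) s a ξ)) (uIoc a b) :=
    fun ξ hξ => hjoint.comp (continuous_const.prodMk continuous_id).continuousOn
      fun s hs => ⟨hξ, ha.trans (uIoc_of_le hab ▸ hs).1.le⟩
  have hspace : ∀ s ∈ uIoc a b,
      ContinuousOn (fun ξ => bearing ℓ (flow2 (spiralInput ω α r₀ ψ₀) s a ξ))
        (closedBall (ℓ + spiral ω α r₀ ψ₀ a) (r₀ / 2)) :=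
    fun s hs => hjoint.comp (continuous_id.prodMk continuous_const).continuousOn
      fun ξ hξ => ⟨hξ, ha.trans (uIoc_of_le hab ▸ hs).1.le⟩
  intro p hp
  refine intervalIntegral.continuousWithinAt_of_dominated_interval (bound := fun _ => 2 ^ 2)
    ?_ ?_ intervalIntegrable_const ?_
  · filter_upwards [self_mem_nhdsWithin] with x hx
    exact (((htime _ hx.1).sub (htime _ hx.2)).norm.pow 2).aestronglyMeasurable measurableSet_uIoc
  · refine Eventually.of_forall fun x => ae_of_all _ fun s _ => ?_
    rw [norm_pow, norm_norm]
    exact pow_le_pow_left₀ (norm_nonneg _) ((norm_sub_le _ _).trans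
      (by linarith [norm_bearing_le ℓ (flow2 (spiralInput ω α r₀ ψ₀) s a x.1),
        norm_bearing_le ℓ (flow2 (spiralInput ω α r₀ ψ₀) s a x.2)])) 2
  · refine ae_of_all _ fun s hs => ?_
    exact ((((hspace s hs).comp continuousOn_fst fun _ hx => hx.1).sub
      ((hspace s hs).comp continuousOn_snd fun _ hx => hx.2)).norm.pow 2) p hp

lemma cumError2_spiralInput_pos (hω : ω ≠ 0) (hα : 0 ≤ α) (hr₀ : 0 < r₀) {a b : ℝ}
    (ha : 0 ≤ a) (hab : a < b) {ξ₁ ξ₂ : Pt}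
    (h₁ : ξ₁ ∈ closedBall (ℓ + spiral ω α r₀ ψ₀ a) (r₀ / 2))
    (h₂ : ξ₂ ∈ closedBall (ℓ + spiral ω α r₀ ψ₀ a) (r₀ / 2)) (hne : ξ₁ ≠ ξ₂) :
    0 < cumError2 ℓ (spiralInput ω α r₀ ψ₀) a b ξ₁ ξ₂ := by
  set flow := flow2 (spiralInput ω α r₀ ψ₀)
  have hcont : ∀ ξ ∈ closedBall (ℓ + spiral ω α r₀ ψ₀ a) (r₀ / 2),
      ContinuousOn (fun s => bearing ℓ (flow s a ξ)) (Icc a b) := fun ξ hξ s hs =>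
    (continuousOn_bearing_flow2_spiralInput hα hr₀ a).comp
      (continuous_const.prodMk continuous_id).continuousOn (fun _ ht => ⟨hξ, ha.trans ht.1⟩) s hs
  refine intervalIntegral.integral_pos hab (((hcont ξ₁ h₁).sub (hcont ξ₂ h₂)).norm.pow 2)
    (fun _ _ => by positivity) ?_
  by_contra! hzero
  obtain ⟨q, hq0, hq⟩ := exists_ne_zero_inner_eq_zero (ξ₁ - ξ₂)
  refine hq0 (eq_zero_of_inner_spiral_eq_const (α := α) (ψ₀ := ψ₀) hω hr₀.ne' hab
    (K := ⟪q, ℓ + spiral ω α r₀ ψ₀ a - ξ₁⟫) fun s hs => ?_)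
  have hdiff : flow s a ξ₁ - flow s a ξ₂ = ξ₁ - ξ₂ := by
    simp only [flow, flow2_spiralInput]; abel
  have hb : bearing ℓ (flow s a ξ₁) = bearing ℓ (flow s a ξ₂) := by
    rw [← sub_eq_zero, ← norm_eq_zero, ← sq_eq_zero_iff]
    exact (hzero s (Ioo_subset_Icc_self hs)).antisymm (sq_nonneg _)
  have := inner_eq_zero_of_bearing_eq hb (by rwa [← sub_ne_zero, hdiff, sub_ne_zero])
    (by rwa [hdiff])
  simp only [flow, flow2_spiralInput] at this
  rwa [show ℓ - (ξ₁ + (spiral ω α r₀ ψ₀ s - spiral ω α r₀ ψ₀ a)) =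
    ℓ + spiral ω α r₀ ψ₀ a - ξ₁ - spiral ω α r₀ ψ₀ s by abel, inner_sub_right, sub_eq_zero,
    eq_comm] at this

lemma weaklyPersistentAt2_spiralInput (hω : ω ≠ 0) (hα : 0 ≤ α) (hr₀ : 0 < r₀) {x₀ : Pt}
    (hx₀ : x₀ = ℓ + spiral ω α r₀ ψ₀ 0) : WeaklyPersistentAt2 ℓ (spiralInput ω α r₀ ψ₀) x₀ := by
  refine ⟨1, one_pos, fun t ht => ⟨r₀ / 2, half_pos hr₀, ?_⟩⟩
  have ha : 0 ≤ t - 1 := by linarith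
  obtain ⟨κ, hκ, hle⟩ := exists_isKFunction_le_of_isCompact
    ((isCompact_closedBall _ _).prod (isCompact_closedBall _ _))
    (continuousOn_cumError2_spiralInput hα hr₀ ha (by linarith))
    (fun _ _ => intervalIntegral.integral_nonneg (by linarith) fun _ _ => by positivity)
    (fun _ hp hne => cumError2_spiralInput_pos hω hα hr₀ ha (by linarith) hp.1 hp.2 hne)
  rw [flow2_spiralInput_of_eq hx₀]
  exact ⟨κ, hκ, fun ξ₁ h₁ ξ₂ h₂ => by simpa [dist_eq_norm] using hle (ξ₁, ξ₂) ⟨h₁, h₂⟩⟩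

lemma tendsto_norm_gram2_spiralInput (hα : 0 < α) (hr₀ : 0 < r₀) {x₀ : Pt}
    (hx₀ : x₀ = ℓ + spiral ω α r₀ ψ₀ 0) {T : ℝ} (hT : 0 ≤ T) :
    Tendsto (fun t => ‖gram2 ℓ (spiralInput ω α r₀ ψ₀) x₀ t T‖) atTop (𝓝 0) := by
  have hbound : ∀ t, ‖gram2 ℓ (spiralInput ω α r₀ ψ₀) x₀ t T‖ ≤
      (2 / (r₀ * exp (α * (t - T)))) ^ 2 * |T| := fun t => by
    refine (intervalIntegral.norm_integral_le_of_norm_le_const fun s hs => ?_).trans_eq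
      (by rw [sub_sub_cancel])
    rw [uIoc_of_le (by linarith)] at hs
    rw [ContinuousLinearMap.norm_adjoint_comp_self, ← sq, flow2_spiralInput_of_eq hx₀]
    refine pow_le_pow_left₀ (norm_nonneg _)
      ((norm_fderiv_bearing_le (add_ne_left.mpr (spiral_ne_zero hr₀ s))).trans ?_) 2
    rw [sub_add_cancel_left, norm_neg, norm_spiral hr₀.le]
    gcongr
    exact hs.1.le
  refine squeeze_zero (fun _ => norm_nonneg _) hbound ?_
  have hexp : Tendsto (fun t => r₀ * exp (α * (t - T))) atTop atTop :=
    (tendsto_exp_atTop.comp ((tendsto_id.atTop_add tendsto_const_nhds).const_mul_atTop hα))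
      |>.const_mul_atTop hr₀
  simpa using ((tendsto_const_nhds.div_atTop hexp).pow 2).mul_const |T|

end Trajectory

theorem stmt19_general (ℓ x₀ : Pt) (ω α r₀ ψ₀ : ℝ)
    (hω : 0 < ω) (hα : 0 < α) (hr₀pos : 0 < r₀)
    (hψ₀ : x₀ - ℓ = r₀ • vec2 (Real.cos ψ₀) (Real.sin ψ₀)) :
    (∀ s : ℝ, 0 ≤ s →
      flow2 (fun τ => (r₀ * Real.exp (α * τ)) •
          (ω • vec2 (-Real.sin (ω * τ + ψ₀)) (Real.cos (ω * τ + ψ₀)) +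
            α • vec2 (Real.cos (ω * τ + ψ₀)) (Real.sin (ω * τ + ψ₀)))) s 0 x₀ =
        ℓ + (r₀ * Real.exp (α * s)) • vec2 (Real.cos (ω * s + ψ₀)) (Real.sin (ω * s + ψ₀)) ∧
      flow2 (fun τ => (r₀ * Real.exp (α * τ)) •
          (ω • vec2 (-Real.sin (ω * τ + ψ₀)) (Real.cos (ω * τ + ψ₀)) +
            α • vec2 (Real.cos (ω * τ + ψ₀)) (Real.sin (ω * τ + ψ₀)))) s 0 x₀ ≠ ℓ) ∧
    WeaklyPersistentAt2 ℓ
      (fun τ => (r₀ * Real.exp (α * τ)) •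
        (ω • vec2 (-Real.sin (ω * τ + ψ₀)) (Real.cos (ω * τ + ψ₀)) +
          α • vec2 (Real.cos (ω * τ + ψ₀)) (Real.sin (ω * τ + ψ₀)))) x₀ ∧
    ∀ T > (0 : ℝ),
      Tendsto (fun t => ‖gram2 ℓ
        (fun τ => (r₀ * Real.exp (α * τ)) •
          (ω • vec2 (-Real.sin (ω * τ + ψ₀)) (Real.cos (ω * τ + ψ₀)) +
            α • vec2 (Real.cos (ω * τ + ψ₀)) (Real.sin (ω * τ + ψ₀)))) x₀ t T‖)
        atTop (nhds 0) := by
  have hx₀ : x₀ = ℓ + spiral ω α r₀ ψ₀ 0 := by rw [spiral_zero, ← hψ₀]; abel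
  exact ⟨fun s _ => ⟨flow2_spiralInput_of_eq hx₀ s,
      (flow2_spiralInput_of_eq hx₀ s).trans_ne (add_ne_left.mpr (spiral_ne_zero hr₀pos s))⟩,
    weaklyPersistentAt2_spiralInput hω.ne' hα.le hr₀pos hx₀,
    fun T hT => tendsto_norm_gram2_spiralInput hα hr₀pos hx₀ hT.le⟩

/-- the outward spiral input is weakly persistent at `x₀`, its
trajectory is `x(s) = ℓ + r₀ e^{αs}(cos(ωs+ψ₀), sin(ωs+ψ₀)) ≠ ℓ`, and for every
`T > 0` the operator norm of the Observability Grammian tends to `0` as `t → ∞`. -/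
theorem stmt19 (ℓ x₀ : Pt) (hx₀ : x₀ ≠ ℓ) (ω α r₀ ψ₀ : ℝ)
    (hω : 0 < ω) (hα : 0 < α) (hr₀ : r₀ = ‖ℓ - x₀‖) (hr₀pos : 0 < r₀)
    (hψ₀ : x₀ - ℓ = r₀ • vec2 (Real.cos ψ₀) (Real.sin ψ₀)) :
    (∀ s : ℝ, 0 ≤ s →
      flow2 (fun τ => (r₀ * Real.exp (α * τ)) •
          (ω • vec2 (-Real.sin (ω * τ + ψ₀)) (Real.cos (ω * τ + ψ₀)) +
            α • vec2 (Real.cos (ω * τ + ψ₀)) (Real.sin (ω * τ + ψ₀)))) s 0 x₀ =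
        ℓ + (r₀ * Real.exp (α * s)) • vec2 (Real.cos (ω * s + ψ₀)) (Real.sin (ω * s + ψ₀)) ∧
      flow2 (fun τ => (r₀ * Real.exp (α * τ)) •
          (ω • vec2 (-Real.sin (ω * τ + ψ₀)) (Real.cos (ω * τ + ψ₀)) +
            α • vec2 (Real.cos (ω * τ + ψ₀)) (Real.sin (ω * τ + ψ₀)))) s 0 x₀ ≠ ℓ) ∧
    WeaklyPersistentAt2 ℓ
      (fun τ => (r₀ * Real.exp (α * τ)) •
        (ω • vec2 (-Real.sin (ω * τ + ψ₀)) (Real.cos (ω * τ + ψ₀)) +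
          α • vec2 (Real.cos (ω * τ + ψ₀)) (Real.sin (ω * τ + ψ₀)))) x₀ ∧
    ∀ T > (0 : ℝ),
      Tendsto (fun t => ‖gram2 ℓ
        (fun τ => (r₀ * Real.exp (α * τ)) •
          (ω • vec2 (-Real.sin (ω * τ + ψ₀)) (Real.cos (ω * τ + ψ₀)) +
            α • vec2 (Real.cos (ω * τ + ψ₀)) (Real.sin (ω * τ + ψ₀)))) x₀ t T‖)
        atTop (nhds 0) :=
  stmt19_general ℓ x₀ ω α r₀ ψ₀ hω hα hr₀pos hψ₀
end
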